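/- For every integer n ≥ 2, ∑_{j=0}^{n} B_j = ∑_{k=1}^{n} (-1)^{n-k} · {n k} · k! · (H_k)^2 + B_n + n − n^2 − 1. -/

import Mathlib

def stirling2 : ℕ → ℕ → ℕ
  | 0, 0 => 1
  | 0, _ + 1 => 0
  | _ + 1, 0 => 0
  | n + 1, k + 1 => (k + 1) * stirling2 n (k + 1) + stirling2 n k

open Finset

lemma stirling2_zero_right (n : ℕ) : stirling2 (n + 1) 0 = 0 := rfl

lemma stirling2_succ (n k : ℕ) :
    stirling2 (n + 1) (k + 1) = (k + 1) * stirling2 n (k + 1) + stirling2 n k := rfl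

lemma stirling2_eq_zero : ∀ {n k : ℕ}, n < k → stirling2 n k = 0
  | 0, 0, h => by omega
  | 0, k + 1, _ => rfl
  | n + 1, 0, h => by omega
  | n + 1, k + 1, h => by
      rw [stirling2_succ, stirling2_eq_zero (show n < k + 1 by omega),
        stirling2_eq_zero (show n < k by omega)]
      ring

lemma pow_eq_sum_stirling2 (n x : ℕ) :
    x ^ n = ∑ k ∈ range (n + 1), stirling2 n k * k.factorial * x.choose k := by
  induction n with
  | zero => simp [stirling2]
  | succ n ih =>
    have key : ∀ k, x * x.choose k = k * x.choose k + (k + 1) * x.choose (k + 1) := by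
      intro k
      rcases le_or_gt k x with h | h
      · have h2 : x.choose (k + 1) * (k + 1) = x.choose k * (x - k) :=
          Nat.choose_succ_right_eq x k
        have h3 : k * x.choose k + (k + 1) * x.choose (k + 1)
            = (k + (x - k)) * x.choose k := by
          rw [mul_comm (k + 1), h2]; ring
        rw [h3, Nat.add_sub_cancel' h]
      · rw [Nat.choose_eq_zero_of_lt h, Nat.choose_eq_zero_of_lt (by omega)]; ring
    have e1 : ∑ k ∈ range (n + 2), k * stirling2 n k * k.factorial * x.choose k
        = ∑ k ∈ range (n + 1), k * stirling2 n k * k.factorial * x.choose k := by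
      rw [Finset.sum_range_succ, stirling2_eq_zero (Nat.lt_succ_self n)]; simp
    have e2 : ∑ k ∈ range (n + 2), k * stirling2 n k * k.factorial * x.choose k
        = ∑ i ∈ range (n + 1), (i + 1) * stirling2 n (i + 1) * (i + 1).factorial * x.choose (i + 1) := by
      rw [Finset.sum_range_succ']; simp
    calc x ^ (n + 1) = x * x ^ n := by ring
      _ = ∑ k ∈ range (n + 1), stirling2 n k * k.factorial * (x * x.choose k) := by
          rw [ih, Finset.mul_sum]; exact Finset.sum_congr rfl fun k _ => by ring
      _ = (∑ k ∈ range (n + 1), k * stirling2 n k * k.factorial * x.choose k)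
          + ∑ i ∈ range (n + 1), stirling2 n i * ((i + 1) * i.factorial) * x.choose (i + 1) := by
          rw [← Finset.sum_add_distrib]
          exact Finset.sum_congr rfl fun k _ => by rw [key k]; ring
      _ = ∑ k ∈ range (n + 2), stirling2 (n + 1) k * k.factorial * x.choose k := by
          rw [← e1, e2,
            Finset.sum_range_succ' (fun k => stirling2 (n + 1) k * k.factorial * x.choose k) (n + 1)]
          simp only [stirling2_zero_right, stirling2_succ, Nat.factorial_succ, zero_mul, mul_zero,
            add_zero, Nat.zero_mul]
          rw [← Finset.sum_add_distrib]
          exact Finset.sum_congr rfl fun i _ => by ring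

lemma sum_choose_range (k m : ℕ) : ∑ x ∈ range m, x.choose k = m.choose (k + 1) := by
  induction m with
  | zero => simp
  | succ m ih => rw [Finset.sum_range_succ, ih, Nat.choose_succ_succ]; exact Nat.add_comm _ _

lemma sum_pow_eq (n m : ℕ) :
    ∑ x ∈ range m, x ^ n
      = ∑ k ∈ range (n + 1), stirling2 n k * k.factorial * m.choose (k + 1) := by
  have : ∀ x ∈ range m, x ^ n = ∑ k ∈ range (n + 1), stirling2 n k * k.factorial * x.choose k :=
    fun x _ => pow_eq_sum_stirling2 n x
  rw [Finset.sum_congr rfl this, Finset.sum_comm]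
  exact Finset.sum_congr rfl fun k _ => by rw [← Finset.mul_sum, sum_choose_range]

lemma cast_descFactorial_eq_prod (m j : ℕ) :
    (m.descFactorial j : ℚ) = ∏ i ∈ range j, ((m : ℚ) - i) := by
  induction j with
  | zero => simp
  | succ j ih =>
    rw [Finset.prod_range_succ, ← ih, Nat.descFactorial_succ]
    rcases le_or_gt j m with h | h
    · rw [Nat.cast_mul, Nat.cast_sub h]; ring
    · rw [Nat.descFactorial_eq_zero_iff_lt.mpr h]; simp
def Aop (n : ℕ) (f : ℕ → ℚ) : ℚ :=
  ∑ k ∈ range (n + 1), (-1 : ℚ) ^ k * (stirling2 n k : ℚ) * (k.factorial : ℚ) * f k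

lemma Aop_congr (n : ℕ) {f g : ℕ → ℚ} (h : ∀ k, f k = g k) : Aop n f = Aop n g :=
  Finset.sum_congr rfl fun k _ => by rw [h k]

lemma Aop_add (n : ℕ) (f g : ℕ → ℚ) :
    Aop n (fun k => f k + g k) = Aop n f + Aop n g := by
  unfold Aop
  rw [← Finset.sum_add_distrib]
  exact Finset.sum_congr rfl fun k _ => by ring

lemma Aop_smul (n : ℕ) (c : ℚ) (f : ℕ → ℚ) :
    Aop n (fun k => c * f k) = c * Aop n f := by
  unfold Aop
  rw [Finset.mul_sum]
  exact Finset.sum_congr rfl fun k _ => by ring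

lemma Aop_succ (n : ℕ) (f : ℕ → ℚ) :
    Aop (n + 1) f = Aop n (fun k => k * f k - (k + 1) * f (k + 1)) := by
  unfold Aop
  rw [Finset.sum_range_succ'
    (fun k => (-1 : ℚ) ^ k * (stirling2 (n + 1) k : ℚ) * (k.factorial : ℚ) * f k) (n + 1)]
  have h0 : (-1 : ℚ) ^ 0 * (stirling2 (n + 1) 0 : ℚ) * ((0:ℕ).factorial : ℚ) * f 0 = 0 := by
    simp [stirling2_zero_right]
  rw [h0, add_zero]
  have e1 : ∑ k ∈ range (n + 2), (-1 : ℚ) ^ k * k * (stirling2 n k : ℚ) * (k.factorial : ℚ) * f k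
      = ∑ i ∈ range (n + 1),
          (-1 : ℚ) ^ (i + 1) * (i + 1) * (stirling2 n (i + 1) : ℚ) * ((i + 1).factorial : ℚ) * f (i + 1) := by
    rw [Finset.sum_range_succ']
    simp
  have e2 : ∑ k ∈ range (n + 2), (-1 : ℚ) ^ k * k * (stirling2 n k : ℚ) * (k.factorial : ℚ) * f k
      = ∑ k ∈ range (n + 1), (-1 : ℚ) ^ k * k * (stirling2 n k : ℚ) * (k.factorial : ℚ) * f k := by
    rw [Finset.sum_range_succ, stirling2_eq_zero (Nat.lt_succ_self n)]
    simp
  calc ∑ i ∈ range (n + 1),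
        (-1 : ℚ) ^ (i + 1) * (stirling2 (n + 1) (i + 1) : ℚ) * ((i + 1).factorial : ℚ) * f (i + 1)
      = (∑ i ∈ range (n + 1),
          (-1 : ℚ) ^ (i + 1) * (i + 1) * (stirling2 n (i + 1) : ℚ) * ((i + 1).factorial : ℚ) * f (i + 1))
        + ∑ i ∈ range (n + 1),
            (-1 : ℚ) ^ (i + 1) * (stirling2 n i : ℚ) * ((i + 1).factorial : ℚ) * f (i + 1) := by
        rw [← Finset.sum_add_distrib]
        refine Finset.sum_congr rfl fun i _ => ?_
        rw [stirling2_succ]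
        push_cast
        ring
    _ = ∑ k ∈ range (n + 1), (-1 : ℚ) ^ k * (stirling2 n k : ℚ) * (k.factorial : ℚ)
          * (k * f k - (k + 1) * f (k + 1)) := by
        have e3 : ∑ k ∈ range (n + 1), (-1 : ℚ) ^ k * (stirling2 n k : ℚ) * (k.factorial : ℚ)
              * ((k : ℚ) * f k - ((k : ℚ) + 1) * f (k + 1))
            = (∑ k ∈ range (n + 1),
                (-1 : ℚ) ^ k * (k : ℚ) * (stirling2 n k : ℚ) * (k.factorial : ℚ) * f k)
              - ∑ i ∈ range (n + 1),
                  (-1 : ℚ) ^ i * (stirling2 n i : ℚ) * (i.factorial : ℚ) * (((i : ℚ) + 1) * f (i + 1)) := by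
          rw [← Finset.sum_sub_distrib]
          exact Finset.sum_congr rfl fun k _ => by ring
        have eB : (∑ i ∈ range (n + 1),
              (-1 : ℚ) ^ (i + 1) * (stirling2 n i : ℚ) * ((i + 1).factorial : ℚ) * f (i + 1))
            = - ∑ i ∈ range (n + 1),
                (-1 : ℚ) ^ i * (stirling2 n i : ℚ) * (i.factorial : ℚ) * (((i : ℚ) + 1) * f (i + 1)) := by
          rw [← Finset.sum_neg_distrib]
          refine Finset.sum_congr rfl fun i _ => ?_
          rw [Nat.factorial_succ]
          push_cast
          ring
        rw [← e1, e2, e3, eB]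
        ring

lemma Aop_one : ∀ n : ℕ, Aop n (fun _ => (1 : ℚ)) = (-1) ^ n
  | 0 => by simp [Aop, stirling2]
  | n + 1 => by
    rw [Aop_succ, Aop_congr n (g := fun k => (-1 : ℚ) * 1) (fun k => by push_cast; ring),
      Aop_smul, Aop_one n]
    ring

lemma Aop_harmonic : ∀ n : ℕ, Aop n harmonic = (-1) ^ n * n
  | 0 => by simp [Aop, stirling2]
  | n + 1 => by
    rw [Aop_succ,
      Aop_congr n (g := fun k => (-1 : ℚ) * harmonic k + (-1) * 1) (fun k => by
        rw [harmonic_succ]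
        have hk : ((k : ℚ) + 1) ≠ 0 := by positivity
        push_cast
        field_simp
        ring),
      Aop_add, Aop_smul, Aop_smul, Aop_one n, Aop_harmonic n]
    push_cast
    ring
lemma prod_zero_sub (k : ℕ) :
    ∏ i ∈ range k, ((0 : ℚ) - ((i : ℚ) + 1)) = (-1) ^ k * (k.factorial : ℚ) := by
  induction k with
  | zero => simp
  | succ k ih =>
    rw [Finset.prod_range_succ, ih, Nat.factorial_succ]
    push_cast
    ring

lemma Aop_inv (n : ℕ) : Aop n (fun k => ((k : ℚ) + 1)⁻¹) = bernoulli n := by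
  classical
  set c : ℕ → ℚ := fun k => (stirling2 n k : ℚ) * (k.factorial : ℚ) / ((k + 1).factorial : ℚ)
    with hc
  set R : Polynomial ℚ := ∑ k ∈ range (n + 1),
      Polynomial.C (c k) * ∏ i ∈ range k, (Polynomial.X - Polynomial.C ((i : ℚ) + 1)) with hR
  set Q : Polynomial ℚ := ∑ i ∈ range (n + 1),
      Polynomial.C (bernoulli i * (((n + 1).choose i : ℕ) : ℚ) / ((n : ℚ) + 1))
        * Polynomial.X ^ (n + 1 - i) with hQ
  have hfacne : ∀ m : ℕ, ((m.factorial : ℕ) : ℚ) ≠ 0 := fun m => by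
    exact_mod_cast m.factorial_ne_zero
  have hPQeval : ∀ m : ℕ, (Polynomial.X * R).eval (m : ℚ) = Q.eval (m : ℚ) := by
    intro m
    have hPe : (Polynomial.X * R).eval (m : ℚ) = ∑ x ∈ range m, (x : ℚ) ^ n := by
      have hfe : (Polynomial.X * R).eval (m : ℚ)
          = ∑ k ∈ range (n + 1),
              (m : ℚ) * (c k * ∏ i ∈ range k, ((m : ℚ) - ((i : ℚ) + 1))) := by
        simp [hR, Polynomial.eval_finset_sum, Finset.mul_sum, Polynomial.eval_prod]
      rw [hfe]
      have hterm : ∀ k ∈ range (n + 1),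
          (m : ℚ) * (c k * ∏ i ∈ range k, ((m : ℚ) - ((i : ℚ) + 1)))
            = ((stirling2 n k * k.factorial * m.choose (k + 1) : ℕ) : ℚ) := by
        intro k _
        have h1 : (m : ℚ) * ∏ i ∈ range k, ((m : ℚ) - ((i : ℚ) + 1))
            = (m.descFactorial (k + 1) : ℚ) := by
          rw [cast_descFactorial_eq_prod, Finset.prod_range_succ']
          push_cast
          ring
        rw [mul_left_comm, h1, Nat.descFactorial_eq_factorial_mul_choose]
        rw [hc]
        have h2 := hfacne (k + 1)
        field_simp
        push_cast
        ring
      rw [Finset.sum_congr rfl hterm, ← Nat.cast_sum, ← sum_pow_eq]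
      push_cast
      rfl
    have hQe : Q.eval (m : ℚ) = ∑ x ∈ range m, (x : ℚ) ^ n := by
      rw [sum_range_pow m n, hQ]
      simp only [Polynomial.eval_finset_sum, Polynomial.eval_mul, Polynomial.eval_C,
        Polynomial.eval_pow, Polynomial.eval_X]
      exact Finset.sum_congr rfl fun i _ => by ring
    rw [hPe, hQe]
  have hPQ : Polynomial.X * R = Q :=
    Polynomial.eq_of_infinite_eval_eq _ _
      (Set.infinite_of_injective_forall_mem (f := (Nat.cast : ℕ → ℚ))
        Nat.cast_injective fun m => hPQeval m)
  have hcoeffP : (Polynomial.X * R).coeff 1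
      = Aop n (fun k => ((k : ℚ) + 1)⁻¹) := by
    rw [show (1 : ℕ) = 0 + 1 from rfl, Polynomial.coeff_X_mul,
      Polynomial.coeff_zero_eq_eval_zero, hR]
    simp only [Polynomial.eval_finset_sum, Polynomial.eval_mul, Polynomial.eval_C,
      Polynomial.eval_prod, Polynomial.eval_sub, Polynomial.eval_X]
    unfold Aop
    refine Finset.sum_congr rfl fun k _ => ?_
    rw [prod_zero_sub]
    have h2 := hfacne (k + 1)
    have h3 : (((k : ℚ)) + 1) ≠ 0 := by positivity
    simp only [hc, Nat.factorial_succ]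
    push_cast
    field_simp
  have hcoeffQ : Q.coeff 1 = bernoulli n := by
    rw [hQ, Polynomial.finset_sum_coeff]
    rw [Finset.sum_eq_single n]
    · rw [Polynomial.coeff_C_mul, Nat.add_sub_cancel_left, pow_one, Polynomial.coeff_X,
        if_pos rfl, mul_one, Nat.choose_succ_self_right]
      field_simp
      rw [Nat.cast_succ]
    · intro i hi hne
      rw [Polynomial.coeff_C_mul, Polynomial.coeff_X_pow, if_neg, mul_zero]
      simp only [mem_range] at hi
      omega
    · intro h
      exact absurd (Finset.self_mem_range_succ n) h
  rw [← hcoeffP, hPQ, hcoeffQ]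
lemma Aop_sq (n : ℕ) :
    Aop (n + 1) (fun k => harmonic k ^ 2)
      = - Aop n (fun k => harmonic k ^ 2) - 2 * ((-1 : ℚ) ^ n * n) - bernoulli n := by
  rw [Aop_succ,
    Aop_congr n (g := fun k => (-1 : ℚ) * harmonic k ^ 2
        + ((-2) * harmonic k + (-1) * ((k : ℚ) + 1)⁻¹)) (fun k => by
      rw [harmonic_succ]
      have hk : ((k : ℚ) + 1) ≠ 0 := by positivity
      push_cast
      field_simp
      ring),
    Aop_add, Aop_add, Aop_smul, Aop_smul, Aop_smul, Aop_harmonic, Aop_inv]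
  ring

lemma main_aux : ∀ n : ℕ, 2 ≤ n →
    (-1 : ℚ) ^ n * Aop n (fun k => harmonic k ^ 2)
      = ∑ j ∈ range (n + 1), bernoulli j - bernoulli n - (n : ℚ) + (n : ℚ) ^ 2 + 1 := by
  intro n hn
  induction n with
  | zero => omega
  | succ n ih =>
    rcases Nat.lt_or_ge n 2 with h | h
    · interval_cases n
      · omega
      · show (-1 : ℚ) ^ 2 * Aop 2 (fun k => harmonic k ^ 2) = _
        rw [show Aop 2 (fun k => harmonic k ^ 2)
            = ∑ k ∈ range 3, (-1 : ℚ) ^ k * (stirling2 2 k : ℚ) * (k.factorial : ℚ)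
                * harmonic k ^ 2 from rfl]
        norm_num [Finset.sum_range_succ, harmonic_succ, stirling2,
          bernoulli_zero, bernoulli_one, show bernoulli 2 = 1/6 by rw [bernoulli_eq_bernoulli'_of_ne_one (by omega), bernoulli'_two]]
    · have IH := ih h
      have hsq : (-1 : ℚ) ^ n * (-1) ^ n = 1 := by
        rw [← pow_add]; exact Even.neg_one_pow ⟨n, rfl⟩
      have hbb : (-1 : ℚ) ^ n * bernoulli n = bernoulli n := by
        have h1 : bernoulli' n = bernoulli n :=
          (bernoulli_eq_bernoulli'_of_ne_one (by omega)).symm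
        calc (-1 : ℚ) ^ n * bernoulli n = (-1) ^ n * ((-1) ^ n * bernoulli' n) := rfl
          _ = bernoulli' n := by rw [← mul_assoc, hsq, one_mul]
          _ = bernoulli n := h1
      rw [Aop_sq, Finset.sum_range_succ]
      push_cast
      linear_combination IH + (2 * (n : ℚ)) * hsq + hbb

theorem cumulative_bernoulli_sum (n : ℕ) (hn : 2 ≤ n) :
    ∑ j ∈ Finset.range (n + 1), bernoulli j
      = ∑ k ∈ Finset.Icc 1 n,
          (-1 : ℚ) ^ (n - k) * (stirling2 n k : ℚ) * (k.factorial : ℚ) * (harmonic k) ^ 2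
        + bernoulli n + (n : ℚ) - (n : ℚ) ^ 2 - 1 := by
  have hA : (-1 : ℚ) ^ n * Aop n (fun k => harmonic k ^ 2)
      = ∑ k ∈ Finset.Icc 1 n,
          (-1 : ℚ) ^ (n - k) * (stirling2 n k : ℚ) * (k.factorial : ℚ) * (harmonic k) ^ 2 := by
    unfold Aop
    rw [Finset.mul_sum, Finset.range_eq_Ico,
      Finset.sum_eq_sum_Ico_succ_bot (show 0 < n + 1 by omega), Finset.Ico_add_one_right_eq_Icc]
    rw [show ((-1 : ℚ) ^ n * ((-1) ^ 0 * (stirling2 n 0 : ℚ) * ((0:ℕ).factorial : ℚ)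
        * harmonic 0 ^ 2)) = 0 by simp [harmonic_zero], zero_add]
    refine Finset.sum_congr rfl fun k hk => ?_
    have hkn : k ≤ n := (Finset.mem_Icc.mp hk).2
    have h2 : (-1 : ℚ) ^ (n - k) * (-1) ^ k = (-1) ^ n := by
      rw [← pow_add, Nat.sub_add_cancel hkn]
    have h3 : (-1 : ℚ) ^ k * (-1) ^ k = 1 := by
      rw [← pow_add]; exact Even.neg_one_pow ⟨k, rfl⟩
    have h1 : (-1 : ℚ) ^ (n - k) = (-1) ^ n * (-1) ^ k := by
      calc (-1 : ℚ) ^ (n - k) = (-1) ^ (n - k) * ((-1) ^ k * (-1) ^ k) := by rw [h3, mul_one]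
        _ = (-1) ^ n * (-1) ^ k := by rw [← mul_assoc, h2]
    rw [h1]
    ring
  rw [← hA, main_aux n hn]
  ring
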